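/- arXiv:0903.4577 — 6 statements merged into one kernel-verified Lean document; each statement's English description precedes it below -/
import Mathlib

section
/- Let there be N players, where player i chooses a strategy x^i in the finite set S^i = {x ∈ ℤ^n : A^i x = b^i, 0 ≤ x ≤ u^i} subject to a joint coupling constraint ∑_{i=1}^N B^i x^i ≤ b^0. Let c_j : ℝ≥0 → ℝ≥0 for j = 1,…,n be monotonously increasing functions, and define the cost to player k (given the other strategies) as ∑_j c_j(x^k_j + ∑_{i≠k} x^i_j) − ∑_j c_j(∑_{i≠k} x^i_j). If at least one joint strategy profile satisfying all constraints exists, then there exists a generalized Nash equilibrium, i.e., a feasible profile (y^1,…,y^N) such that no player k can strictly decrease his cost by unilaterally switching to another strategy z^k ∈ S^k keeping the coupling constraint satisfied. -/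
/-- Player `i`'s pure strategy set: integer solutions of `A x = b`, `0 ≤ x ≤ u`. -/
def Strat {dk n : ℕ} (A : Matrix (Fin dk) (Fin n) ℤ) (b : Fin dk → ℤ)
    (u : Fin n → ℤ) (x : Fin n → ℤ) : Prop :=
  A.mulVec x = b ∧ ∀ j, 0 ≤ x j ∧ x j ≤ u j

/-- The coupling constraint `∑ i, Bⁱ xⁱ ≤ b⁰`. -/
def Coupled {N n m : ℕ} (B : Fin N → Matrix (Fin m) (Fin n) ℤ) (b0 : Fin m → ℤ)
    (x : Fin N → Fin n → ℤ) : Prop :=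
  ∀ r, (∑ i, (B i).mulVec (x i)) r ≤ b0 r

/-- Cost to player `k`, given the strategies of all players. -/
noncomputable def Cost {N n : ℕ} (c : Fin n → ℝ → ℝ) (x : Fin N → Fin n → ℤ)
    (k : Fin N) : ℝ :=
  ∑ j, c j ((x k j : ℝ) + ∑ i ∈ Finset.univ.erase k, (x i j : ℝ)) -
    ∑ j, c j (∑ i ∈ Finset.univ.erase k, (x i j : ℝ))

/-!
The game is an exact potential game: a unilateral deviation of player `k` changes his cost by
exactly the change of Rosenthal's potential `∑ⱼ cⱼ(∑ᵢ xⁱⱼ)`, because the subtracted term of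
`Cost` depends only on the other players. The feasible profiles form a finite nonempty set, so a
feasible minimiser of the potential exists, and it is a generalized Nash equilibrium.
-/

open Finset Function

noncomputable def rosenthalPotential {N n : ℕ} (c : Fin n → ℝ → ℝ)
    (x : Fin N → Fin n → ℤ) : ℝ :=
  ∑ j, c j (∑ i, (x i j : ℝ))

section Potential

variable {N n : ℕ} (c : Fin n → ℝ → ℝ)

lemma cost_eq_rosenthalPotential_sub (x : Fin N → Fin n → ℤ) (k : Fin N) :
    Cost c x k = rosenthalPotential c x - ∑ j, c j (∑ i ∈ univ.erase k, (x i j : ℝ)) := by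
  have hsplit : ∀ j, (x k j : ℝ) + ∑ i ∈ univ.erase k, (x i j : ℝ) = ∑ i, (x i j : ℝ) :=
    fun j => add_sum_erase univ (fun i => (x i j : ℝ)) (mem_univ k)
  simp only [Cost, rosenthalPotential, hsplit]

lemma cost_update_sub_cost (x : Fin N → Fin n → ℤ) (k : Fin N) (z : Fin n → ℤ) :
    Cost c (update x k z) k - Cost c x k =
      rosenthalPotential c (update x k z) - rosenthalPotential c x := by
  have hothers : ∀ j, ∑ i ∈ univ.erase k, (update x k z i j : ℝ) =
      ∑ i ∈ univ.erase k, (x i j : ℝ) := fun j =>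
    sum_congr rfl fun i hi => by rw [update_of_ne (ne_of_mem_erase hi)]
  simp only [cost_eq_rosenthalPotential_sub, hothers]
  ring

end Potential

lemma finite_setOf_forall_strat {N n : ℕ} {d : Fin N → ℕ}
    (A : ∀ i : Fin N, Matrix (Fin (d i)) (Fin n) ℤ) (b : ∀ i : Fin N, Fin (d i) → ℤ)
    (u : Fin N → Fin n → ℤ) :
    {x : Fin N → Fin n → ℤ | ∀ i, Strat (A i) (b i) (u i) (x i)}.Finite :=
  (Set.Finite.pi fun i => Set.Finite.pi fun j => Set.finite_Icc 0 (u i j)).subset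
    fun _ hx i _ j _ => (hx i).2 j

theorem generalized_nash_equilibrium_exists_general
    (N n m : ℕ) (d : Fin N → ℕ)
    (A : ∀ i : Fin N, Matrix (Fin (d i)) (Fin n) ℤ)
    (b : ∀ i : Fin N, Fin (d i) → ℤ)
    (u : Fin N → Fin n → ℤ)
    (B : Fin N → Matrix (Fin m) (Fin n) ℤ) (b0 : Fin m → ℤ)
    (c : Fin n → ℝ → ℝ)
    (hex : ∃ x : Fin N → Fin n → ℤ,
      (∀ i, Strat (A i) (b i) (u i) (x i)) ∧ Coupled B b0 x) :
    ∃ y : Fin N → Fin n → ℤ,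
      (∀ i, Strat (A i) (b i) (u i) (y i)) ∧ Coupled B b0 y ∧
      ∀ (k : Fin N) (z : Fin n → ℤ),
        Strat (A k) (b k) (u k) z →
        Coupled B b0 (Function.update y k z) →
        Cost c y k ≤ Cost c (Function.update y k z) k := by
  set F := {x : Fin N → Fin n → ℤ | (∀ i, Strat (A i) (b i) (u i) (x i)) ∧ Coupled B b0 x}
  have hF : F.Finite := (finite_setOf_forall_strat A b u).subset fun _ hx => hx.1
  obtain ⟨y, ⟨hyS, hyC⟩, hymin⟩ := Set.exists_min_image F (rosenthalPotential c) hF hex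
  refine ⟨y, hyS, hyC, fun k z hz hzC => ?_⟩
  have hupd : update y k z ∈ F :=
    ⟨(forall_update_iff y fun i x => Strat (A i) (b i) (u i) x).2 ⟨hz, fun i _ => hyS i⟩, hzC⟩
  linarith [hymin _ hupd, cost_update_sub_cost c y k z]

theorem generalized_nash_equilibrium_exists
    (N n m : ℕ) (d : Fin N → ℕ)
    (A : ∀ i : Fin N, Matrix (Fin (d i)) (Fin n) ℤ)
    (b : ∀ i : Fin N, Fin (d i) → ℤ)
    (u : Fin N → Fin n → ℤ)
    (B : Fin N → Matrix (Fin m) (Fin n) ℤ) (b0 : Fin m → ℤ)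
    (c : Fin n → ℝ → ℝ) (hmono : ∀ j, Monotone (c j))
    (hex : ∃ x : Fin N → Fin n → ℤ,
      (∀ i, Strat (A i) (b i) (u i) (x i)) ∧ Coupled B b0 x) :
    ∃ y : Fin N → Fin n → ℤ,
      (∀ i, Strat (A i) (b i) (u i) (y i)) ∧ Coupled B b0 y ∧
      ∀ (k : Fin N) (z : Fin n → ℤ),
        Strat (A k) (b k) (u k) z →
        Coupled B b0 (Function.update y k z) →
        Cost c y k ≤ Cost c (Function.update y k z) k :=
  generalized_nash_equilibrium_exists_general N n m d A b u B b0 c hex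
end

section
/- For any integer matrix D ∈ ℤ^{d×n}, the Graver basis G(D), defined as the set of nonzero z ∈ ker(D) ∩ ℤ^n that cannot be written as z = u + v with u, v nonzero elements of ker(D) ∩ ℤ^n satisfying u_j v_j ≥ 0 for all j, is a finite set. -/
/-- `z` is a Graver basis element of `D`: a nonzero integer kernel element of `D` that is
not the sum of two nonzero sign-compatible integer kernel elements. -/
def InGraver {κ ι : Type*} [Fintype κ] [Fintype ι] (D : Matrix κ ι ℤ) (z : ι → ℤ) : Prop :=
  z ≠ 0 ∧ D.mulVec z = 0 ∧
    ¬ ∃ u v : ι → ℤ, u ≠ 0 ∧ v ≠ 0 ∧ D.mulVec u = 0 ∧ D.mulVec v = 0 ∧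
      (∀ j, 0 ≤ u j * v j) ∧ z = u + v

/-!
Send `z ∈ ℤⁿ` to its positive and negative parts in `(ℕ × ℕ)ⁿ`. This is injective, and the
componentwise order on the image is the conformal order `x ⊑ y` (`x j * (y j - x j) ≥ 0` for
all `j`). If a nonzero kernel element `x` satisfies `x ⊑ y` with `x ≠ y`, then `y = x + (y - x)`
is a sign-compatible decomposition of `y`, so the Graver basis maps to an antichain. By
Dickson's lemma `(ℕ × ℕ)ⁿ` is well-quasi-ordered, so that antichain is finite.
-/

variable {κ ι : Type*}

def posNegParts (z : ι → ℤ) : ι → ℕ × ℕ := fun j => ((z j).toNat, (-z j).toNat)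

theorem posNegParts_injective : Function.Injective (posNegParts (ι := ι)) := by
  intro x y h
  funext j
  have := congrFun h j
  simp only [posNegParts, Prod.mk.injEq] at this
  omega

theorem posNegParts_le_iff {x y : ι → ℤ} :
    posNegParts x ≤ posNegParts y ↔ ∀ j, 0 ≤ x j * (y j - x j) := by
  refine forall_congr' fun j => ?_
  simp only [posNegParts, Prod.mk_le_mk]
  rw [mul_nonneg_iff]
  omega

theorem InGraver.eq_of_posNegParts_le [Fintype κ] [Fintype ι] {D : Matrix κ ι ℤ} {x y : ι → ℤ}
    (hy : InGraver D y) (hx0 : x ≠ 0) (hx : D.mulVec x = 0)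
    (hle : posNegParts x ≤ posNegParts y) : x = y := by
  obtain ⟨-, hyker, hyind⟩ := hy
  by_contra hne
  refine hyind ⟨x, y - x, hx0, sub_ne_zero.mpr (Ne.symm hne), hx, ?_, posNegParts_le_iff.mp hle, ?_⟩
  · rw [Matrix.mulVec_sub, hyker, hx, sub_zero]
  · abel

/-- The Graver basis of any integer matrix is a finite set. -/
theorem graver_basis_finite (d n : ℕ) (D : Matrix (Fin d) (Fin n) ℤ) :
    {z : Fin n → ℤ | InGraver D z}.Finite := by
  have hanti : IsAntichain (· ≤ ·) (posNegParts '' {z | InGraver D z}) := by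
    rintro _ ⟨x, hx, rfl⟩ _ ⟨y, hy, rfl⟩ hne hle
    exact hne (congrArg _ (hy.eq_of_posNegParts_le hx.1 hx.2.1 hle))
  exact (hanti.finite_of_partiallyWellOrderedOn (Set.isPWO_of_wellQuasiOrderedLE _)).of_finite_image
    posNegParts_injective.injOn
end

section
/- Graver-test optimality certificate: let D ∈ ℤ^{d×n}, d ∈ ℤ^d, u ∈ ℤ^n_{≥0}, and let f_j : ℝ → ℝ be convex functions for j = 1,…,n. A feasible point x^0 of {x ∈ ℤ^n : Dx = d, 0 ≤ x ≤ u} minimizes ∑_j f_j(x_j) over the feasible set if and only if there is no g ∈ G(D) such that x^0 + g is feasible and ∑_j f_j(x^0_j + g_j) < ∑_j f_j(x^0_j). -/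
/-- Feasibility for the integer program `Dx = d`, `0 ≤ x ≤ u`. -/
def Feas {dd n : ℕ} (D : Matrix (Fin dd) (Fin n) ℤ) (dv : Fin dd → ℤ)
    (u : Fin n → ℤ) (x : Fin n → ℤ) : Prop :=
  D.mulVec x = dv ∧ ∀ j, 0 ≤ x j ∧ x j ≤ u j

/-
Every integer kernel element of `D` is built from Graver elements by sign-compatible sums, and
for sign-compatible `u, v` the increments of a separable convex objective are superadditive:
`F(x⁰ + u + v) - F(x⁰) ≥ (F(x⁰ + u) - F(x⁰)) + (F(x⁰ + v) - F(x⁰))`, where `x⁰ + u` and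
`x⁰ + v` stay feasible because they lie coordinatewise between `x⁰` and `x⁰ + u + v`.
Induction along such a decomposition of `x - x⁰` shows that if no Graver step improves `x⁰`,
no feasible `x` does.
-/

open Finset Set Matrix

def SignCompatible {ι R : Type*} [Mul R] [Zero R] [LE R] (u v : ι → R) : Prop :=
  ∀ j, 0 ≤ u j * v j

theorem SignCompatible.symm {ι R : Type*} [CommMagma R] [Zero R] [LE R] {u v : ι → R}
    (huv : SignCompatible u v) : SignCompatible v u :=
  fun j => mul_comm (u j) (v j) ▸ huv j

theorem ConvexOn.map_add_add_le {s : Set ℝ} {f : ℝ → ℝ} (hf : ConvexOn ℝ s f) {t a b : ℝ}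
    (ht : t ∈ s) (hts : t + (a + b) ∈ s) (hab : 0 ≤ a * b) :
    f (t + a) + f (t + b) ≤ f t + f (t + (a + b)) := by
  rcases eq_or_ne (a + b) 0 with hS | hS
  · obtain ⟨rfl, rfl⟩ : a = 0 ∧ b = 0 := by constructor <;> nlinarith
    simp
  -- `t + a` and `t + b` are the convex combinations of `t` and `t + (a + b)` with
  -- swapped weights `b / (a + b)` and `a / (a + b)`
  obtain ⟨hwa, hwb⟩ : 0 ≤ a / (a + b) ∧ 0 ≤ b / (a + b) := by
    rcases mul_nonneg_iff.mp hab with ⟨ha, hb⟩ | ⟨ha, hb⟩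
    · exact ⟨by positivity, by positivity⟩
    · exact ⟨div_nonneg_of_nonpos ha (by linarith), div_nonneg_of_nonpos hb (by linarith)⟩
  have hw : b / (a + b) + a / (a + b) = 1 := by field_simp; ring
  have hfa := hf.2 ht hts hwb hwa hw
  have hfb := hf.2 ht hts hwa hwb (by rw [add_comm, hw])
  have hpa : (b / (a + b)) • t + (a / (a + b)) • (t + (a + b)) = t + a := by
    simp only [smul_eq_mul]; field_simp; ring
  have hpb : (a / (a + b)) • t + (b / (a + b)) • (t + (a + b)) = t + b := by
    simp only [smul_eq_mul]; field_simp; ring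
  rw [hpa] at hfa
  rw [hpb] at hfb
  simp only [smul_eq_mul] at hfa hfb
  calc f (t + a) + f (t + b)
      ≤ (b / (a + b) + a / (a + b)) * (f t + f (t + (a + b))) := by linarith
    _ = f t + f (t + (a + b)) := by rw [hw, one_mul]

theorem sum_add_add_le_of_convexOn {ι : Type*} [Fintype ι] {f : ι → ℝ → ℝ}
    (hf : ∀ j, ConvexOn ℝ univ (f j)) (x a b : ι → ℝ) (hab : SignCompatible a b) :
    ∑ j, f j (x j + a j) + ∑ j, f j (x j + b j) ≤
      ∑ j, f j (x j) + ∑ j, f j (x j + (a j + b j)) := by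
  simp only [← Finset.sum_add_distrib]
  exact sum_le_sum fun j _ => (hf j).map_add_add_le (mem_univ _) (mem_univ _) (hab j)

section Kernel

variable {κ ι : Type*} [Fintype κ] [Fintype ι]

theorem SignCompatible.sum_natAbs_lt_add {u v : ι → ℤ} (huv : SignCompatible u v)
    (hv : v ≠ 0) : ∑ j, (u j).natAbs < ∑ j, ((u + v) j).natAbs := by
  have hsplit : ∑ j, ((u + v) j).natAbs = ∑ j, (u j).natAbs + ∑ j, (v j).natAbs := by
    rw [← Finset.sum_add_distrib]
    refine sum_congr rfl fun j _ => ?_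
    rcases mul_nonneg_iff.mp (huv j) with ⟨hu, hv⟩ | ⟨hu, hv⟩ <;>
      simp only [Pi.add_apply] <;> omega
  obtain ⟨j, hj⟩ := Function.ne_iff.mp hv
  have hpos : 0 < ∑ j, (v j).natAbs :=
    sum_pos' (fun _ _ => Nat.zero_le _) ⟨j, Finset.mem_univ j, Int.natAbs_pos.mpr hj⟩
  omega

theorem ker_induction_on_graver (D : Matrix κ ι ℤ) {P : (ι → ℤ) → Prop} (zero : P 0)
    (graver : ∀ g, InGraver D g → P g)
    (add : ∀ u v, D *ᵥ u = 0 → D *ᵥ v = 0 → SignCompatible u v → P u → P v → P (u + v))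
    {z : ι → ℤ} (hz : D *ᵥ z = 0) : P z := by
  by_cases h0 : z = 0
  · exact h0 ▸ zero
  by_cases hg : InGraver D z
  · exact graver z hg
  obtain ⟨u, v, hu, hv, hDu, hDv, huv, rfl⟩ : ∃ u v : ι → ℤ, u ≠ 0 ∧ v ≠ 0 ∧ D *ᵥ u = 0 ∧
      D *ᵥ v = 0 ∧ SignCompatible u v ∧ z = u + v := by
    simpa [InGraver, SignCompatible, h0, hz] using hg
  have hu_lt := huv.sum_natAbs_lt_add hv
  have hv_lt := add_comm u v ▸ huv.symm.sum_natAbs_lt_add hu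
  exact add u v hDu hDv huv (ker_induction_on_graver D zero graver add hDu)
    (ker_induction_on_graver D zero graver add hDv)
termination_by ∑ j, (z j).natAbs

end Kernel

theorem Feas.add_of_signCompatible {dd n : ℕ} {D : Matrix (Fin dd) (Fin n) ℤ}
    {ub x u v : Fin n → ℤ} {dv : Fin dd → ℤ} (hx : Feas D dv ub x)
    (hxuv : Feas D dv ub (x + (u + v))) (hu : D *ᵥ u = 0) (huv : SignCompatible u v) :
    Feas D dv ub (x + u) := by
  refine ⟨by rw [Matrix.mulVec_add, hu, add_zero, hx.1], fun j => ?_⟩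
  have hxj := hx.2 j
  have hxuvj := hxuv.2 j
  simp only [Pi.add_apply] at hxuvj ⊢
  rcases mul_nonneg_iff.mp (huv j) with ⟨hu, hv⟩ | ⟨hu, hv⟩ <;> omega

/-- Graver test: a feasible point is optimal for a separable convex objective iff no
Graver move gives a feasible point with strictly smaller objective value. -/
theorem graver_optimality_certificate
    (dd n : ℕ) (D : Matrix (Fin dd) (Fin n) ℤ) (dv : Fin dd → ℤ) (u : Fin n → ℤ)
    (f : Fin n → ℝ → ℝ) (hconv : ∀ j, ConvexOn ℝ Set.univ (f j))
    (x0 : Fin n → ℤ) (hx0 : Feas D dv u x0) :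
    (∀ x : Fin n → ℤ, Feas D dv u x → ∑ j, f j (x0 j : ℝ) ≤ ∑ j, f j (x j : ℝ)) ↔
      ¬ ∃ g : Fin n → ℤ, InGraver D g ∧ Feas D dv u (x0 + g) ∧
        ∑ j, f j ((x0 j : ℝ) + (g j : ℝ)) < ∑ j, f j (x0 j : ℝ) := by
  constructor
  · rintro hopt ⟨g, -, hfeas, hlt⟩
    have := hopt _ hfeas
    simp only [Pi.add_apply, Int.cast_add] at this
    linarith
  intro hno x hx
  have hstep : ∀ z, D *ᵥ z = 0 → Feas D dv u (x0 + z) →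
      ∑ j, f j (x0 j : ℝ) ≤ ∑ j, f j ((x0 j : ℝ) + (z j : ℝ)) := by
    intro z hz
    refine ker_induction_on_graver D (by simp) (fun g hg hfeas => not_lt.mp fun hlt =>
      hno ⟨g, hg, hfeas, hlt⟩) (fun v w hv hw hvw ihv ihw hfeas => ?_) hz
    have hsuper := sum_add_add_le_of_convexOn hconv (fun j => (x0 j : ℝ)) (fun j => (v j : ℝ))
      (fun j => (w j : ℝ)) (fun j => (by exact_mod_cast hvw j : (0 : ℝ) ≤ v j * w j))
    have hfv := ihv (hx0.add_of_signCompatible hfeas hv hvw)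
    have hfw := ihw (hx0.add_of_signCompatible (add_comm v w ▸ hfeas) hw hvw.symm)
    simp only [Pi.add_apply, Int.cast_add]
    linarith
  have hker : D *ᵥ (x - x0) = 0 := by rw [Matrix.mulVec_sub, hx.1, hx0.1, sub_self]
  simpa using hstep (x - x0) hker (by simpa using hx)
end

section
/- If x is feasible for {Dx = d, 0 ≤ x ≤ u, x ∈ ℤ^n} and y is another feasible point, then y − x decomposes as a sign-compatible sum of Graver basis elements g_t of D, and each partial point x + g_t is again feasible (satisfies Dx = d and the bounds 0 ≤ x + g_t ≤ u). -/
/-!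
Since `Dx = Dy = d`, the difference `y - x` lies in the kernel of `D`. A kernel element that is
not in the Graver basis splits into two nonzero sign-compatible kernel elements, each of strictly
smaller `ℓ₁`-norm, so repeated splitting yields a decomposition in which every `gₜ` lies
coordinatewise between `0` and `y - x`. Then `x + gₜ` lies coordinatewise between `x` and `y`,
hence within the bounds, and `D (x + gₜ) = Dx` because `gₜ ∈ ker D`.
-/

open Set Matrix

lemma Int.natAbs_add_of_mul_nonneg {a b : ℤ} (h : 0 ≤ a * b) :
    (a + b).natAbs = a.natAbs + b.natAbs := by
  rcases Int.mul_nonneg_iff.mp h with ⟨ha, hb⟩ | ⟨ha, hb⟩ <;> omega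

section LinearOrderedRing

variable {α : Type*} [Ring α] [LinearOrder α] [IsStrictOrderedRing α] {a b c : α}

lemma mem_uIcc_zero_add_of_mul_nonneg (h : 0 ≤ a * b) : a ∈ uIcc 0 (a + b) := by
  rcases mul_nonneg_iff.mp h with ⟨ha, hb⟩ | ⟨ha, hb⟩
  · exact mem_uIcc_of_le ha (le_add_of_nonneg_right hb)
  · exact mem_uIcc_of_ge (add_le_of_nonpos_right hb) ha

lemma mul_nonneg_of_mem_uIcc_zero (h : a ∈ uIcc 0 c) : 0 ≤ a * c := by
  rcases mem_uIcc.mp h with ⟨h₀, h₁⟩ | ⟨h₀, h₁⟩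
  · exact mul_nonneg h₀ (h₀.trans h₁)
  · exact mul_nonneg_of_nonpos_of_nonpos h₁ (h₀.trans h₁)

end LinearOrderedRing

lemma add_mem_Icc_of_mem_uIcc_zero_sub {α : Type*} [AddCommGroup α] [LinearOrder α]
    [IsOrderedAddMonoid α] {x y g lo hi : α} (hx : x ∈ Icc lo hi) (hy : y ∈ Icc lo hi)
    (hg : g ∈ uIcc 0 (y - x)) : x + g ∈ Icc lo hi := by
  refine uIcc_subset_Icc hx hy ?_
  rcases mem_uIcc.mp hg with ⟨h₀, h₁⟩ | ⟨h₀, h₁⟩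
  · exact mem_uIcc_of_le (le_add_of_nonneg_right h₀) (le_sub_iff_add_le'.mp h₁)
  · exact mem_uIcc_of_ge (sub_le_iff_le_add'.mp h₀) (add_le_of_nonpos_right h₁)

variable {κ ι : Type*} [Fintype κ] [Fintype ι]

lemma sum_natAbs_lt_sum_natAbs_add {a b : ι → ℤ} (hab : ∀ j, 0 ≤ a j * b j) (hb : b ≠ 0) :
    ∑ j, (a j).natAbs < ∑ j, ((a + b) j).natAbs := by
  have hb_pos : 0 < ∑ j, (b j).natAbs := by
    simpa [Nat.pos_iff_ne_zero, Finset.sum_eq_zero_iff, funext_iff] using hb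
  calc ∑ j, (a j).natAbs < ∑ j, (a j).natAbs + ∑ j, (b j).natAbs := by omega
    _ = ∑ j, ((a + b) j).natAbs := by
      simp [← Finset.sum_add_distrib, Int.natAbs_add_of_mul_nonneg (hab _)]

theorem exists_graver_sum_of_mulVec_eq_zero (D : Matrix κ ι ℤ) {z : ι → ℤ} (hz : D *ᵥ z = 0) :
    ∃ (s : ℕ) (g : Fin s → ι → ℤ), (∀ t, InGraver D (g t)) ∧ ∑ t, g t = z ∧
      ∀ t j, g t j ∈ uIcc 0 (z j) := by
  induction hN : ∑ j, (z j).natAbs using Nat.strong_induction_on generalizing z with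
  | _ N ih =>
  by_cases hz₀ : z = 0
  · exact ⟨0, Fin.elim0, fun t => t.elim0, by simp [hz₀], fun t => t.elim0⟩
  by_cases hG : InGraver D z
  · exact ⟨1, fun _ => z, fun _ => hG, by simp, fun _ _ => right_mem_uIcc⟩
  obtain ⟨a, b, ha, hb, hDa, hDb, hab, rfl⟩ : ∃ a b : ι → ℤ, a ≠ 0 ∧ b ≠ 0 ∧ D *ᵥ a = 0 ∧
      D *ᵥ b = 0 ∧ (∀ j, 0 ≤ a j * b j) ∧ z = a + b := by
    simpa [InGraver, hz₀, hz] using hG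
  obtain ⟨s₁, g₁, hG₁, hsum₁, hconf₁⟩ := ih _ (hN ▸ sum_natAbs_lt_sum_natAbs_add hab hb) hDa rfl
  have hba : ∀ j, 0 ≤ b j * a j := fun j => mul_comm (a j) (b j) ▸ hab j
  obtain ⟨s₂, g₂, hG₂, hsum₂, hconf₂⟩ :=
    ih _ (hN ▸ add_comm a b ▸ sum_natAbs_lt_sum_natAbs_add hba ha) hDb rfl
  refine ⟨s₁ + s₂, Fin.append g₁ g₂, Fin.addCases (by simpa) (by simpa),
    by simp [Fin.sum_univ_add, hsum₁, hsum₂], fun t j => ?_⟩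
  refine Fin.addCases (fun t => ?_) (fun t => ?_) t
  · simpa using uIcc_subset_uIcc_left (mem_uIcc_zero_add_of_mul_nonneg (hab j)) (hconf₁ t j)
  · simpa [add_comm] using
      uIcc_subset_uIcc_left (mem_uIcc_zero_add_of_mul_nonneg (hba j)) (hconf₂ t j)

/-- For feasible `x` and `y`, the difference `y - x` has a sign-compatible Graver
decomposition whose single steps `x + gₜ` are all feasible. -/
theorem feasible_difference_graver_decomposition
    (dd n : ℕ) (D : Matrix (Fin dd) (Fin n) ℤ) (dv : Fin dd → ℤ) (u : Fin n → ℤ)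
    (x y : Fin n → ℤ) (hx : Feas D dv u x) (hy : Feas D dv u y) :
    ∃ (s : ℕ) (g : Fin s → Fin n → ℤ),
      (∀ t, InGraver D (g t)) ∧ (∑ t, g t) = y - x ∧
      (∀ t j, 0 ≤ g t j * (y j - x j)) ∧
      ∀ t, Feas D dv u (x + g t) := by
  have hker : D *ᵥ (y - x) = 0 := by rw [mulVec_sub, hx.1, hy.1, sub_self]
  obtain ⟨s, g, hG, hsum, hconf⟩ := exists_graver_sum_of_mulVec_eq_zero D hker
  refine ⟨s, g, hG, hsum, fun t j => mul_nonneg_of_mem_uIcc_zero (hconf t j),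
    fun t => ⟨?_, fun j => ?_⟩⟩
  · rw [mulVec_add, hx.1, (hG t).2.1, add_zero]
  · exact add_mem_Icc_of_mem_uIcc_zero_sub (hx.2 j) (hy.2 j) (hconf t j)
end

section
/- For fixed matrices A ∈ ℤ^{d×n} and B ∈ ℤ^{m×n}, the cardinality and encoding length of the Graver basis of the N-fold matrix [A,B]^(N) (with N copies of B in a top row and N diagonal copies of A below) are bounded by a polynomial in N. -/
set_option linter.unusedSectionVars false


/-- The `N`-fold matrix `[A,B]⁽ᴺ⁾`: `N` copies of `B` in a top row block and `N`
diagonal copies of `A` below. -/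
def Nfold {d n m : ℕ} (A : Matrix (Fin d) (Fin n) ℤ) (B : Matrix (Fin m) (Fin n) ℤ)
    (N : ℕ) : Matrix (Fin m ⊕ Fin N × Fin d) (Fin N × Fin n) ℤ :=
  fun r c =>
    match r, c with
    | Sum.inl r, (_, j) => B r j
    | Sum.inr (i', r), (i, j) => if i' = i then A r j else 0

/-- A crude binary-free encoding length of an integer vector. -/
def encLen {ι : Type*} [Fintype ι] (z : ι → ℤ) : ℕ := ∑ j, ((z j).natAbs + 1)

/-!
Every brick of a Graver element `z` of `[A,B]⁽ᴺ⁾` lies in the kernel of `A`, so it is a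
conformal sum of elements of the Graver basis `𝒢(A)`. Forgetting which brick each piece comes
from, the multiset of pieces is a minimal nonzero relation among the vectors `B g`, `g ∈ 𝒢(A)`:
a proper sub-multiset that were a relation would reassemble into a proper conformal kernel
element of `[A,B]⁽ᴺ⁾`. By Dickson's lemma there are finitely many minimal relations; let
`g(A,B)` be their largest size, which does not depend on `N`. Then `z` is determined by at most
`g(A,B)` pairs (brick, element of `𝒢(A)`), which leaves at most `(N·|𝒢(A)| + 1)^g(A,B)`
possibilities, each of `1`-norm at most `g(A,B) · max {‖g‖₁ : g ∈ 𝒢(A)}`.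
-/

open Finset Matrix

theorem Multiset.exists_le_map_eq_of_le_map {α β : Type*} [DecidableEq β] (f : α → β)
    {s : Multiset α} {t : Multiset β} (h : t ≤ s.map f) : ∃ u ≤ s, u.map f = t := by
  induction s using Multiset.induction_on generalizing t with
  | empty => exact ⟨0, le_rfl, by simpa [eq_comm] using h⟩
  | cons a s ih =>
    rw [Multiset.map_cons] at h
    by_cases ha : f a ∈ t
    · obtain ⟨u, hu, hut⟩ := ih (Multiset.erase_le_iff_le_cons.mpr h)
      exact ⟨a ::ₘ u, Multiset.cons_le_cons a hu,
        by rw [Multiset.map_cons, hut, Multiset.cons_erase ha]⟩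
    · obtain ⟨u, hu, hut⟩ := ih ((Multiset.le_cons_of_notMem ha).mp h)
      exact ⟨u, hu.trans (Multiset.le_cons_self s a), hut⟩

theorem List.sum_map_eq_sum_fin_getElem? {β M : Type*} [AddCommMonoid M] (e : β → M)
    (l : List β) {k : ℕ} (hk : l.length ≤ k) :
    (l.map e).sum = ∑ t : Fin k, (l[(t : ℕ)]?).elim 0 e := by
  induction l generalizing k with
  | nil => simp
  | cons a l ih =>
    obtain ⟨k, rfl⟩ : ∃ k', k = k' + 1 := ⟨k - 1, by simp at hk; omega⟩
    rw [Fin.sum_univ_succ]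
    simp [ih (by simpa using hk)]

theorem Multiset.exists_sum_map_eq_sum_fin {β M : Type*} [AddCommMonoid M] (e : β → M)
    {P : Multiset β} {k : ℕ} (hk : Multiset.card P ≤ k) :
    ∃ f : Fin k → Option β,
      (∀ t, ∀ b ∈ f t, b ∈ P) ∧ (P.map e).sum = ∑ t, (f t).elim 0 e := by
  refine ⟨fun t => P.toList[(t : ℕ)]?, fun t b hb => Multiset.mem_toList.mp
    (List.mem_of_getElem? hb), ?_⟩
  conv_lhs => rw [← Multiset.coe_toList P]
  rw [Multiset.map_coe, Multiset.sum_coe]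
  exact List.sum_map_eq_sum_fin_getElem? e _ (by simpa using hk)

theorem Set.Finite.isPWO_multisets_subset {α : Type*} {s : Set α} (hs : s.Finite) :
    {R : Multiset α | ∀ x ∈ R, x ∈ s}.IsPWO := by
  classical
  have : Finite s := hs.to_subtype
  have : WellQuasiOrderedLE (Multiset s) :=
    (Finsupp.orderIsoMultiset (ι := s)).wellQuasiOrderedLE_iff.mp inferInstance
  refine ((Set.isPWO_of_wellQuasiOrderedLE Set.univ).image_of_monotone
    (Multiset.map_mono ((↑) : s → α))).mono fun R hR => ?_
  lift R to Multiset s using hR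
  exact ⟨R, trivial, rfl⟩

namespace Graver

section Conformal

variable {ι : Type*}

def Conformal (u z : ι → ℤ) : Prop :=
  ∀ j, (0 ≤ u j ∧ u j ≤ z j) ∨ (z j ≤ u j ∧ u j ≤ 0)

theorem conformal_refl (z : ι → ℤ) : Conformal z z := fun j => by omega

theorem Conformal.trans {u v z : ι → ℤ} (huv : Conformal u v) (hvz : Conformal v z) :
    Conformal u z := fun j => by have := huv j; have := hvz j; omega

theorem conformal_add_left {u v : ι → ℤ} (h : ∀ j, 0 ≤ u j * v j) :
    Conformal u (u + v) := by
  intro j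
  rcases mul_nonneg_iff.mp (h j) with ⟨_, _⟩ | ⟨_, _⟩ <;> simp only [Pi.add_apply] <;> omega

theorem conformal_add_right {u v : ι → ℤ} (h : ∀ j, 0 ≤ u j * v j) : Conformal v (u + v) :=
  add_comm v u ▸ conformal_add_left fun j => mul_comm (u j) (v j) ▸ h j

def orthant (z : ι → ℤ) : AddSubmonoid (ι → ℤ) where
  carrier := {u | ∀ j, (0 ≤ z j → 0 ≤ u j) ∧ (z j ≤ 0 → u j ≤ 0)}
  add_mem' {u v} hu hv j := by have := hu j; have := hv j; simp only [Pi.add_apply]; omega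
  zero_mem' j := by simp

theorem Conformal.mem_orthant {u z : ι → ℤ} (h : Conformal u z) : u ∈ orthant z :=
  fun j => by have := h j; omega

theorem mul_nonneg_of_mem_orthant {u v z : ι → ℤ} (hu : u ∈ orthant z) (hv : v ∈ orthant z)
    (j : ι) : 0 ≤ u j * v j := by
  rcases le_total 0 (z j) with h | h
  · exact mul_nonneg ((hu j).1 h) ((hv j).1 h)
  · exact mul_nonneg_of_nonpos_of_nonpos ((hu j).2 h) ((hv j).2 h)

theorem multiset_sum_ne_zero_of_mem_orthant {z : ι → ℤ} {S : Multiset (ι → ℤ)}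
    (hS : S ≠ 0) (h : ∀ p ∈ S, p ≠ 0 ∧ p ∈ orthant z) : S.sum ≠ 0 := by
  obtain ⟨p, hp⟩ := Multiset.exists_mem_of_ne_zero hS
  obtain ⟨S', rfl⟩ := Multiset.exists_cons_of_mem hp
  have hS' : S'.sum ∈ orthant z := AddSubmonoid.multiset_sum_mem _ _ fun q hq =>
    (h q (Multiset.mem_cons_of_mem hq)).2
  have hsign := mul_nonneg_of_mem_orthant (h p hp).2 hS'
  rw [Multiset.sum_cons]
  intro h0
  refine (h p hp).1 (funext fun j => ?_)
  have := congrFun h0 j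
  have := hsign j
  simp only [Pi.add_apply, Pi.zero_apply] at *
  nlinarith

end Conformal

section L1Norm

variable {ι : Type*} [Fintype ι]

def l1Norm (z : ι → ℤ) : ℕ := ∑ j, (z j).natAbs

theorem l1Norm_pos {z : ι → ℤ} (hz : z ≠ 0) : 0 < l1Norm z := by
  obtain ⟨j, hj⟩ := Function.ne_iff.mp hz
  exact Finset.sum_pos' (fun _ _ => Nat.zero_le _) ⟨j, mem_univ j, Int.natAbs_pos.mpr hj⟩

theorem l1Norm_add_of_mul_nonneg {u v : ι → ℤ} (h : ∀ j, 0 ≤ u j * v j) :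
    l1Norm (u + v) = l1Norm u + l1Norm v := by
  rw [l1Norm, l1Norm, l1Norm, ← sum_add_distrib]
  refine sum_congr rfl fun j _ => ?_
  rcases mul_nonneg_iff.mp (h j) with ⟨_, _⟩ | ⟨_, _⟩ <;> simp only [Pi.add_apply] <;> omega

theorem l1Norm_sum_le {κ : Type*} (s : Finset κ) (x : κ → ι → ℤ) :
    l1Norm (∑ t ∈ s, x t) ≤ ∑ t ∈ s, l1Norm (x t) :=
  le_sum_of_subadditive l1Norm (by simp [l1Norm]) (fun u v => by
    simp only [l1Norm, ← sum_add_distrib]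
    exact sum_le_sum fun j _ => Int.natAbs_add_le _ _) s x

theorem encLen_eq (z : ι → ℤ) : encLen z = l1Norm z + Fintype.card ι := by
  simp [encLen, l1Norm, sum_add_distrib]

end L1Norm

section GraverBasis

variable {ι κ : Type*} [Fintype ι] [Fintype κ] {D : Matrix κ ι ℤ}

theorem _root_.InGraver.eq_of_conformal {u z : ι → ℤ} (hu : u ≠ 0) (hDu : D *ᵥ u = 0)
    (hz : InGraver D z) (h : Conformal u z) : u = z := by
  by_contra hne
  refine hz.2.2 ⟨u, z - u, hu, sub_ne_zero.mpr (Ne.symm hne), hDu,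
    by rw [mulVec_sub, hz.2.1, hDu, sub_zero], fun j => ?_, by abel⟩
  rcases h j with ⟨_, _⟩ | ⟨_, _⟩ <;> simp only [Pi.sub_apply] <;> nlinarith

theorem _root_.InGraver.eq_zero_or_eq_of_le {z : ι → ℤ} (hz : InGraver D z)
    {P Q : Multiset (ι → ℤ)} (hP : ∀ p ∈ P, p ≠ 0 ∧ p ∈ orthant z) (hsum : P.sum = z)
    (hQP : Q ≤ P) (hDQ : D *ᵥ Q.sum = 0) : Q = 0 ∨ Q = P := by
  obtain ⟨R, rfl⟩ := Multiset.le_iff_exists_add.mp hQP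
  by_contra! h
  have hR : R ≠ 0 := fun hR => h.2 (by rw [hR, add_zero])
  have hpieces : ∀ S ≤ Q + R, ∀ p ∈ S, p ≠ 0 ∧ p ∈ orthant z :=
    fun S hS p hp => hP p (Multiset.mem_of_le hS hp)
  have hQR : Q.sum + R.sum = z := by rw [← hsum, Multiset.sum_add]
  refine hz.2.2 ⟨Q.sum, R.sum,
    multiset_sum_ne_zero_of_mem_orthant h.1 (hpieces Q le_self_add),
    multiset_sum_ne_zero_of_mem_orthant hR (hpieces R le_add_self), hDQ,
    by rw [← add_sub_cancel_left Q.sum R.sum, hQR, mulVec_sub, hz.2.1, hDQ, sub_zero],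
    mul_nonneg_of_mem_orthant
      (AddSubmonoid.multiset_sum_mem _ _ fun p hp => (hpieces Q le_self_add p hp).2)
      (AddSubmonoid.multiset_sum_mem _ _ fun p hp => (hpieces R le_add_self p hp).2),
    hQR.symm⟩

-- Graver elements are pairwise conformally incomparable, and the conformal order is the
-- componentwise order on positive and negative parts, so Dickson's lemma applies.
def posNegParts (z : ι → ℤ) (j : ι) : ℕ × ℕ := ((z j).toNat, (-z j).toNat)

theorem graver_finite (D : Matrix κ ι ℤ) : {z | InGraver D z}.Finite := by
  have hinj : Function.Injective (posNegParts (ι := ι)) := fun u v h => funext fun j => by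
    have := congrFun h j
    simp only [posNegParts, Prod.ext_iff] at this
    omega
  refine Set.Finite.of_finite_image ?_ hinj.injOn
  refine IsAntichain.finite_of_partiallyWellOrderedOn ?_ (Set.isPWO_of_wellQuasiOrderedLE _)
  rintro _ ⟨u, hu, rfl⟩ _ ⟨z, hz, rfl⟩ hne hle
  refine hne (congrArg _ (InGraver.eq_of_conformal hu.1 hu.2.1 hz fun j => ?_))
  have := hle j
  simp only [posNegParts, Prod.mk_le_mk] at this
  omega

theorem exists_graver_decomposition {x : ι → ℤ} (hx : D *ᵥ x = 0) :
    ∃ L : Multiset (ι → ℤ), (∀ g ∈ L, InGraver D g ∧ Conformal g x) ∧ L.sum = x := by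
  induction hn : l1Norm x using Nat.strong_induction_on generalizing x with
  | _ n ih =>
  by_cases hx0 : x = 0
  · exact ⟨0, by simp, by simp [hx0]⟩
  by_cases hg : InGraver D x
  · exact ⟨{x}, by simpa using ⟨hg, conformal_refl x⟩, by simp⟩
  obtain ⟨u, v, hu, hv, hDu, hDv, huv, rfl⟩ := not_not.mp fun h => hg ⟨hx0, hx, h⟩
  have hl1 := l1Norm_add_of_mul_nonneg huv
  obtain ⟨Lu, hLu, hLu_sum⟩ := ih _ (by have := l1Norm_pos hv; omega) hDu rfl
  obtain ⟨Lv, hLv, hLv_sum⟩ := ih _ (by have := l1Norm_pos hu; omega) hDv rfl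
  refine ⟨Lu + Lv, ?_, by rw [Multiset.sum_add, hLu_sum, hLv_sum]⟩
  rintro g hg
  rcases Multiset.mem_add.mp hg with hg | hg
  · exact ⟨(hLu g hg).1, (hLu g hg).2.trans (conformal_add_left huv)⟩
  · exact ⟨(hLv g hg).1, (hLv g hg).2.trans (conformal_add_right huv)⟩

end GraverBasis

section Relations

variable {ι κ μ : Type*} [Fintype ι] [Fintype κ] [Fintype μ]
  (A : Matrix κ ι ℤ) (B : Matrix μ ι ℤ)

def IsGraverRelation (R : Multiset (ι → ℤ)) : Prop :=
  R ≠ 0 ∧ (∀ g ∈ R, InGraver A g) ∧ (R.map (B *ᵥ ·)).sum = 0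

def primitiveRelations : Set (Multiset (ι → ℤ)) := {R | Minimal (IsGraverRelation A B) R}

theorem primitiveRelations_finite : (primitiveRelations A B).Finite :=
  (setOfPred_minimal_antichain _).finite_of_partiallyWellOrderedOn <|
    (graver_finite A).isPWO_multisets_subset.mono fun _ hR => hR.1.2.1

noncomputable def graverComplexity : ℕ :=
  (primitiveRelations_finite A B).toFinset.sup Multiset.card

theorem card_le_graverComplexity {R : Multiset (ι → ℤ)} (hR : R ∈ primitiveRelations A B) :
    Multiset.card R ≤ graverComplexity A B :=
  Finset.le_sup (f := Multiset.card) ((primitiveRelations_finite A B).mem_toFinset.mpr hR)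

end Relations

section Nfold

variable {d n m : ℕ} (A : Matrix (Fin d) (Fin n) ℤ) (B : Matrix (Fin m) (Fin n) ℤ) {N : ℕ}

def embedBrick (q : Fin N × (Fin n → ℤ)) : Fin N × Fin n → ℤ :=
  Function.uncurry (Pi.single q.1 q.2)

theorem embedBrick_apply (q : Fin N × (Fin n → ℤ)) (i : Fin N) (j : Fin n) :
    embedBrick q (i, j) = if i = q.1 then q.2 j else 0 := by
  simp [embedBrick, Pi.single_apply]; split_ifs <;> rfl

theorem multiset_sum_map_embedBrick (i : Fin N) (S : Multiset (Fin n → ℤ)) :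
    (S.map fun g => embedBrick (i, g)).sum = embedBrick (i, S.sum) := by
  funext ⟨k, j⟩
  by_cases hk : k = i <;> simp [Pi.multiset_sum_apply, embedBrick_apply, hk]

theorem embedBrick_ne_zero {q : Fin N × (Fin n → ℤ)} (hq : q.2 ≠ 0) :
    embedBrick q ≠ 0 := by
  obtain ⟨j, hj⟩ := Function.ne_iff.mp hq
  exact Function.ne_iff.mpr ⟨(q.1, j), by simpa [embedBrick_apply] using hj⟩

theorem l1Norm_embedBrick (q : Fin N × (Fin n → ℤ)) : l1Norm (embedBrick q) = l1Norm q.2 := by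
  simp [l1Norm, Fintype.sum_prod_type, embedBrick_apply, apply_ite Int.natAbs]

theorem embedBrick_mem_orthant {z : Fin N × Fin n → ℤ} {q : Fin N × (Fin n → ℤ)}
    (h : q.2 ∈ orthant (Function.curry z q.1)) : embedBrick q ∈ orthant z := by
  rintro ⟨i, j⟩
  by_cases hi : i = q.1
  · subst hi; simpa [embedBrick_apply] using h j
  · simp [embedBrick_apply, hi]

theorem nfold_mulVec_inl (z : Fin N × Fin n → ℤ) (r : Fin m) :
    (Nfold A B N *ᵥ z) (Sum.inl r) = ∑ i, (B *ᵥ Function.curry z i) r := by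
  simp only [mulVec, dotProduct, Nfold, Fintype.sum_prod_type, Function.curry_apply]

theorem nfold_mulVec_inr (z : Fin N × Fin n → ℤ) (i : Fin N) (r : Fin d) :
    (Nfold A B N *ᵥ z) (Sum.inr (i, r)) = (A *ᵥ Function.curry z i) r := by
  simp [mulVec, dotProduct, Nfold, Fintype.sum_prod_type, ite_mul]

theorem nfold_mulVec_embedBrick {q : Fin N × (Fin n → ℤ)} (hq : A *ᵥ q.2 = 0) :
    Nfold A B N *ᵥ embedBrick q = Sum.elim (B *ᵥ q.2) 0 := by
  have hbrick : ∀ i, Function.curry (embedBrick q) i = if i = q.1 then q.2 else 0 := fun i => by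
    funext j; simp only [Function.curry_apply, embedBrick_apply]; split_ifs <;> rfl
  funext r
  rcases r with r | ⟨i, r⟩
  · simp [nfold_mulVec_inl, hbrick, apply_ite (B *ᵥ ·), ite_apply]
  · by_cases hi : i = q.1 <;> simp [nfold_mulVec_inr, hbrick, hi, hq]

theorem nfold_mulVec_multiset_sum {Q : Multiset (Fin N × (Fin n → ℤ))}
    (hQ : ∀ q ∈ Q, A *ᵥ q.2 = 0) :
    Nfold A B N *ᵥ (Q.map embedBrick).sum = Sum.elim (Q.map (B *ᵥ ·.2)).sum 0 := by
  induction Q using Multiset.induction_on with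
  | empty => funext r; cases r <;> simp
  | cons q Q ih =>
    simp only [Multiset.map_cons, Multiset.sum_cons, mulVec_add,
      nfold_mulVec_embedBrick A B (hQ q (Multiset.mem_cons_self q Q)),
      ih fun p hp => hQ p (Multiset.mem_cons_of_mem hp)]
    funext r; cases r <;> simp

theorem nfold_mulVec_multiset_sum_eq_zero_iff {Q : Multiset (Fin N × (Fin n → ℤ))}
    (hQ : ∀ q ∈ Q, A *ᵥ q.2 = 0) :
    Nfold A B N *ᵥ (Q.map embedBrick).sum = 0 ↔ ((Q.map Prod.snd).map (B *ᵥ ·)).sum = 0 := by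
  rw [nfold_mulVec_multiset_sum A B hQ, Multiset.map_map]
  simp [funext_iff]

theorem exists_brick_decomposition {z : Fin N × Fin n → ℤ}
    (hz : ∀ i, A *ᵥ Function.curry z i = 0) :
    ∃ P : Multiset (Fin N × (Fin n → ℤ)),
      (∀ q ∈ P, InGraver A q.2 ∧ embedBrick q ∈ orthant z) ∧
        (P.map embedBrick).sum = z := by
  choose L hL hsum using fun i => exists_graver_decomposition (hz i)
  refine ⟨Finset.univ.val.bind fun i => (L i).map (Prod.mk i), ?_, ?_⟩
  · simp only [Multiset.mem_bind, Multiset.mem_map]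
    rintro _ ⟨i, -, g, hg, rfl⟩
    exact ⟨(hL i g hg).1, embedBrick_mem_orthant (hL i g hg).2.mem_orthant⟩
  · rw [Multiset.map_bind, Multiset.sum_bind, ← Finset.sum_eq_multiset_sum]
    simp only [Multiset.map_map, Function.comp_def, multiset_sum_map_embedBrick, hsum]
    funext ⟨i, j⟩
    simp [embedBrick_apply]

variable {A B}

theorem _root_.InGraver.exists_pieces_card_le {z : Fin N × Fin n → ℤ}
    (hz : InGraver (Nfold A B N) z) :
    ∃ P : Multiset (Fin N × (Fin n → ℤ)), (∀ q ∈ P, InGraver A q.2) ∧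
      Multiset.card P ≤ graverComplexity A B ∧ (P.map embedBrick).sum = z := by
  classical
  have hbricks : ∀ i, A *ᵥ Function.curry z i = 0 := fun i => funext fun r => by
    simpa [nfold_mulVec_inr] using congrFun hz.2.1 (Sum.inr (i, r))
  obtain ⟨P, hP, hsum⟩ := exists_brick_decomposition A hbricks
  have hrel : ∀ Q ≤ P, Nfold A B N *ᵥ (Q.map embedBrick).sum = 0 ↔
      ((Q.map Prod.snd).map (B *ᵥ ·)).sum = 0 := fun Q hQ =>
    nfold_mulVec_multiset_sum_eq_zero_iff A B fun q hq => (hP q (Multiset.mem_of_le hQ hq)).1.2.1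
  have hpieces : ∀ p ∈ P.map embedBrick, p ≠ 0 ∧ p ∈ orthant z := by
    simp only [Multiset.mem_map]
    rintro _ ⟨q, hq, rfl⟩
    exact ⟨embedBrick_ne_zero (hP q hq).1.1, (hP q hq).2⟩
  refine ⟨P, fun q hq => (hP q hq).1, ?_, hsum⟩
  rw [← Multiset.card_map Prod.snd]
  refine card_le_graverComplexity A B ⟨⟨?_, ?_, (hrel P le_rfl).mp (hsum ▸ hz.2.1)⟩, ?_⟩
  · rintro hP0
    exact hz.1 (by rw [← hsum, Multiset.map_eq_zero.mp hP0]; simp)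
  · simp only [Multiset.mem_map]
    rintro _ ⟨q, hq, rfl⟩
    exact (hP q hq).1
  · intro R hR hRP
    obtain ⟨Q, hQP, rfl⟩ := Multiset.exists_le_map_eq_of_le_map _ hRP
    rcases hz.eq_zero_or_eq_of_le hpieces hsum (Multiset.map_le_map hQP)
      ((hrel Q hQP).mpr hR.2.2) with hQ | hQ
    · exact absurd (by simpa using hQ) hR.1
    · rw [Multiset.eq_of_le_of_card_le hQP (by simpa using (congrArg Multiset.card hQ).ge)]

-- `none` stands for an unused slot, so that fewer than `k` pieces can be assembled.
def assemble {k : ℕ} (f : Fin k → Option (Fin N × (Fin n → ℤ))) : Fin N × Fin n → ℤ :=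
  ∑ t, (f t).elim 0 embedBrick

theorem encLen_assemble_le {k M : ℕ} {f : Fin k → Option (Fin N × (Fin n → ℤ))}
    (hf : ∀ t, ∀ q ∈ f t, l1Norm q.2 ≤ M) : encLen (assemble f) ≤ k * M + N * n := by
  have hterm : ∀ t, l1Norm ((f t).elim 0 embedBrick) ≤ M := fun t => by
    cases ht : f t with
    | none => simp [l1Norm]
    | some q => simpa [l1Norm_embedBrick] using hf t q ht
  calc encLen (assemble f) = l1Norm (assemble f) + N * n := by simp [encLen_eq]
    _ ≤ ∑ t, l1Norm ((f t).elim 0 embedBrick) + N * n := by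
      gcongr; exact l1Norm_sum_le _ _
    _ ≤ k * M + N * n := by
      gcongr
      exact (Finset.sum_le_card_nsmul Finset.univ _ M fun t _ => hterm t).trans_eq (by simp)

variable (A B N)

noncomputable def graverCandidates : Finset (Fin N × Fin n → ℤ) :=
  (Fintype.piFinset fun _ : Fin (graverComplexity A B) =>
    (univ ×ˢ (graver_finite A).toFinset).insertNone).image assemble

theorem card_graverCandidates_le :
    #(graverCandidates A B N) ≤ (#(graver_finite A).toFinset * N + 1) ^ graverComplexity A B :=
  card_image_le.trans (by simp [mul_comm])

theorem encLen_le_of_mem_graverCandidates {z : Fin N × Fin n → ℤ}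
    (hz : z ∈ graverCandidates A B N) :
    encLen z ≤ graverComplexity A B * (graver_finite A).toFinset.sup l1Norm + N * n := by
  obtain ⟨f, hf, rfl⟩ := mem_image.mp hz
  refine encLen_assemble_le fun t q hq => le_sup ?_
  have hft := Fintype.mem_piFinset.mp hf t
  simp only [mem_insertNone, mem_product, mem_univ, true_and] at hft
  exact hft q hq

variable {A B N}

theorem _root_.InGraver.mem_graverCandidates {z : Fin N × Fin n → ℤ}
    (hz : InGraver (Nfold A B N) z) : z ∈ graverCandidates A B N := by
  obtain ⟨P, hP, hcard, rfl⟩ := hz.exists_pieces_card_le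
  obtain ⟨f, hfP, hf⟩ := Multiset.exists_sum_map_eq_sum_fin embedBrick hcard
  refine mem_image.mpr ⟨f, Fintype.mem_piFinset.mpr fun t => ?_, hf.symm⟩
  cases ht : f t with
  | none => simp
  | some q => simpa using hP q (hfP t q ht)

end Nfold

end Graver

open Graver Finset Polynomial in
/-- For fixed `A`, `B`, the cardinality and total encoding length of the Graver basis
of `[A,B]⁽ᴺ⁾` are bounded by a polynomial in `N`. -/
theorem nfold_graver_polynomial_bound
    (d n m : ℕ) (A : Matrix (Fin d) (Fin n) ℤ) (B : Matrix (Fin m) (Fin n) ℤ) :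
    ∃ p : Polynomial ℕ, ∀ N : ℕ,
      ∃ G : Finset ((Fin N × Fin n) → ℤ),
        (↑G = {z : (Fin N × Fin n) → ℤ | InGraver (Nfold A B N) z}) ∧
        G.card ≤ p.eval N ∧ (∑ z ∈ G, encLen z) ≤ p.eval N := by
  classical
  set a := #(graver_finite A).toFinset
  set g := graverComplexity A B
  set c := g * (graver_finite A).toFinset.sup l1Norm
  refine ⟨(C a * X + 1) ^ g * (C c + C n * X + 1), fun N => ?_⟩
  have hcard := card_graverCandidates_le A B N
  refine ⟨(graverCandidates A B N).filter (InGraver (Nfold A B N)),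
    by ext z; simpa using InGraver.mem_graverCandidates, ?_, ?_⟩
  all_goals simp only [eval_mul, eval_pow, eval_add, eval_C, eval_X, eval_one]
  · exact (card_filter_le _ _).trans (hcard.trans (Nat.le_mul_of_pos_right _ (by omega)))
  · calc ∑ z ∈ _, encLen z ≤ #((graverCandidates A B N).filter _) * (c + N * n) :=
          sum_le_card_nsmul _ _ _ fun z hz =>
            encLen_le_of_mem_graverCandidates A B N (mem_filter.mp hz).1
      _ ≤ (a * N + 1) ^ g * (c + n * N + 1) :=
          Nat.mul_le_mul ((card_filter_le _ _).trans hcard) (by rw [mul_comm N n]; omega)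
end

section
/- For fixed A ∈ ℤ^{d×n} and B ∈ ℤ^{m×n}, the sizes and encoding lengths of the Graver bases of the matrices [A,B]^(N), for N = 1, 2, …, eventually stabilize in the following sense: there exists a Graver complexity g(A,B) such that every Graver basis element of [A,B]^(N) has at most g(A,B) nonzero bricks (nonzero components x^i ∈ ℤ^n among the N bricks), independent of N. -/
open Set Matrix

theorem mem_uIcc_zero_iff_mul_sub_nonneg {α : Type*} [Ring α] [LinearOrder α]
    [IsStrictOrderedRing α] {a b : α} : a ∈ uIcc 0 b ↔ 0 ≤ a * (b - a) := by
  rw [mem_uIcc, mul_nonneg_iff, sub_nonneg, sub_nonpos]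
  constructor <;> rintro (⟨h₁, h₂⟩ | ⟨h₁, h₂⟩)
  exacts [.inl ⟨h₁, h₂⟩, .inr ⟨h₂, h₁⟩, .inl ⟨h₁, h₂⟩, .inr ⟨h₂, h₁⟩]

theorem Multiset.sum_mem_uIcc_of_le {α : Type*} [AddCommGroup α] [LinearOrder α]
    [IsOrderedAddMonoid α] {s t : Multiset α} {c : α} (hs : ∀ a ∈ s, a ∈ uIcc 0 c)
    (hts : t ≤ s) : t.sum ∈ uIcc 0 s.sum := by
  obtain ⟨r, rfl⟩ := Multiset.le_iff_exists_add.1 hts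
  have ht : ∀ a ∈ t, a ∈ uIcc 0 c := fun a ha => hs a (Multiset.mem_add.2 (.inl ha))
  have hr : ∀ a ∈ r, a ∈ uIcc 0 c := fun a ha => hs a (Multiset.mem_add.2 (.inr ha))
  rw [Multiset.sum_add]
  rcases le_total 0 c with hc | hc
  · simp only [uIcc_of_le hc] at ht hr
    have ht₀ := Multiset.sum_nonneg fun a ha => (ht a ha).1
    have hr₀ := Multiset.sum_nonneg fun a ha => (hr a ha).1
    exact Icc_subset_uIcc ⟨ht₀, le_add_of_nonneg_right hr₀⟩
  · simp only [uIcc_of_ge hc] at ht hr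
    have ht₀ : t.sum ≤ 0 := by simpa using t.sum_le_card_nsmul 0 fun a ha => (ht a ha).2
    have hr₀ : r.sum ≤ 0 := by simpa using r.sum_le_card_nsmul 0 fun a ha => (hr a ha).2
    exact Icc_subset_uIcc' ⟨add_le_of_nonpos_right hr₀, ht₀⟩

/-- The conformal order `⊑` of the paper. -/
def ConformalLE {ι : Type*} (x y : ι → ℤ) : Prop := ∀ j, x j ∈ uIcc 0 (y j)

local infix:50 " ⊑ " => ConformalLE

section Conformal

variable {ι : Type*} {x y z : ι → ℤ}

theorem ConformalLE.refl (x : ι → ℤ) : x ⊑ x := fun _ => right_mem_uIcc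

theorem ConformalLE.trans (hxy : x ⊑ y) (hyz : y ⊑ z) : x ⊑ z :=
  fun j => uIcc_subset_uIcc_left (hyz j) (hxy j)

theorem ConformalLE.eq_zero (hx : x ⊑ 0) : x = 0 :=
  funext fun j => by simpa using hx j

theorem conformalLE_iff_mul_nonneg (h : x + y = z) : x ⊑ z ↔ ∀ j, 0 ≤ x j * y j := by
  subst h
  simp only [ConformalLE, mem_uIcc_zero_iff_mul_sub_nonneg, Pi.add_apply, add_sub_cancel_left]

theorem ConformalLE.sum_natAbs_lt [Fintype ι] (hxy : x ⊑ y) (hne : x ≠ y) :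
    ∑ j, (x j).natAbs < ∑ j, (y j).natAbs := by
  obtain ⟨j, hj⟩ := Function.ne_iff.1 hne
  refine Finset.sum_lt_sum (fun i _ => ?_) ⟨j, Finset.mem_univ _, ?_⟩
  · have := mem_uIcc.1 (hxy i); omega
  · have := mem_uIcc.1 (hxy j); omega

theorem Multiset.sum_conformalLE_sum_of_le {s t : Multiset (ι → ℤ)} (hs : ∀ x ∈ s, x ⊑ z)
    (hts : t ≤ s) : t.sum ⊑ s.sum := fun j => by
  simp only [Pi.multiset_sum_apply]
  exact Multiset.sum_mem_uIcc_of_le (c := z j) (by simpa using fun x hx => hs x hx j)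
    (Multiset.map_le_map hts)

theorem Multiset.sum_ne_zero_of_conformalLE {s : Multiset (ι → ℤ)} (hs : ∀ x ∈ s, x ⊑ z)
    (hx : x ∈ s) (hx₀ : x ≠ 0) : s.sum ≠ 0 := fun h => hx₀ <| ConformalLE.eq_zero <| by
  simpa [h] using Multiset.sum_conformalLE_sum_of_le hs (Multiset.singleton_le.2 hx)

end Conformal

section Graver

variable {κ ι : Type*} [Fintype κ] [Fintype ι] {D : Matrix κ ι ℤ}

theorem InGraver.eq_of_conformalLE {g h : ι → ℤ} (hg : InGraver D g) (hh : InGraver D h)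
    (hgh : g ⊑ h) : g = h := by
  by_contra hne
  refine hh.2.2 ⟨g, h - g, hg.1, sub_ne_zero.2 (Ne.symm hne), hg.2.1, ?_, ?_, ?_⟩
  · rw [mulVec_sub, hh.2.1, hg.2.1, sub_zero]
  · exact (conformalLE_iff_mul_nonneg (add_sub_cancel g h)).1 hgh
  · exact (add_sub_cancel g h).symm

theorem finite_setOf_inGraver (D : Matrix κ ι ℤ) : {g | InGraver D g}.Finite := by
  let parts (x : ι → ℤ) : ι ⊕ ι → ℕ := Sum.elim (fun j => (x j).toNat) (fun j => (-x j).toNat)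
  have parts_le {x y : ι → ℤ} (h : parts x ≤ parts y) : x ⊑ y := fun j => by
    have h₁ := h (.inl j); have h₂ := h (.inr j)
    simp only [parts, Sum.elim_inl, Sum.elim_inr] at h₁ h₂
    rw [mem_uIcc]; omega
  refine Set.Finite.of_finite_image (f := parts) (WellQuasiOrderedLE.finite_of_isAntichain ?_)
    fun x _ y _ h => (InGraver.eq_of_conformalLE ‹_› ‹_› (parts_le h.le))
  rintro _ ⟨g, hg, rfl⟩ _ ⟨h, hh, rfl⟩ hne hle
  exact hne (congrArg parts (hg.eq_of_conformalLE hh (parts_le hle)))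

theorem exists_inGraver_decomposition (D : Matrix κ ι ℤ) {x : ι → ℤ} (hx : D *ᵥ x = 0) :
    ∃ s : Multiset (ι → ℤ), (∀ g ∈ s, InGraver D g ∧ g ⊑ x) ∧ s.sum = x := by
  induction hk : ∑ j, (x j).natAbs using Nat.strong_induction_on generalizing x with
  | _ k ih =>
    by_cases hx₀ : x = 0
    · exact ⟨0, by simp, by simp [hx₀]⟩
    by_cases hgx : InGraver D x
    · exact ⟨{x}, by simpa using ⟨hgx, ConformalLE.refl x⟩, Multiset.sum_singleton x⟩
    obtain ⟨u, v, hu, hv, hDu, hDv, huv, rfl⟩ := not_not.1 fun h => hgx ⟨hx₀, hx, h⟩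
    have hu_le : u ⊑ u + v := (conformalLE_iff_mul_nonneg rfl).2 huv
    have hv_le : v ⊑ u + v :=
      (conformalLE_iff_mul_nonneg (add_comm v u)).2 fun j => mul_comm (u j) (v j) ▸ huv j
    obtain ⟨s, hs, rfl⟩ := ih _ (hk ▸ hu_le.sum_natAbs_lt (by simpa using hv)) hDu rfl
    obtain ⟨t, ht, rfl⟩ := ih _ (hk ▸ hv_le.sum_natAbs_lt (by simpa using hu)) hDv rfl
    refine ⟨s + t, fun g hg => ?_, Multiset.sum_add s t⟩
    rcases Multiset.mem_add.1 hg with hg | hg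
    exacts [⟨(hs g hg).1, (hs g hg).2.trans hu_le⟩, ⟨(ht g hg).1, (ht g hg).2.trans hv_le⟩]

end Graver

theorem Multiset.exists_le_map_eq {α β : Type*} {f : α → β} {s : Multiset α} {t : Multiset β}
    (h : t ≤ s.map f) : ∃ u ≤ s, u.map f = t := by
  induction s, t using Quotient.inductionOn₂ with
  | _ l l' =>
    obtain ⟨l'', hperm, hsub⟩ := Multiset.coe_le.1 h
    obtain ⟨l₀, hl₀, rfl⟩ := List.sublist_map_iff.1 hsub
    exact ⟨l₀, Multiset.coe_le.2 hl₀.subperm, Multiset.coe_eq_coe.2 hperm⟩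

theorem Multiset.finite_setOf_minimal {α : Type*} {G : Set α} (hG : G.Finite)
    (P : Multiset α → Prop) : {s | (∀ a ∈ s, a ∈ G) ∧ Minimal P s}.Finite := by
  classical
  have := hG.to_subtype
  let mult (s : Multiset α) (g : G) : ℕ := s.count (g : α)
  have le_of_mult_le {s t : Multiset α} (hs : ∀ a ∈ s, a ∈ G) (h : mult s ≤ mult t) :
      s ≤ t := Multiset.le_iff_count.2 fun a => by
    by_cases ha : a ∈ G
    · exact h ⟨a, ha⟩
    · simp [Multiset.count_eq_zero.2 fun h => ha (hs a h)]
  refine Set.Finite.of_finite_image (f := mult) (WellQuasiOrderedLE.finite_of_isAntichain ?_)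
    fun s hs t ht h => le_antisymm (le_of_mult_le hs.1 h.le) (le_of_mult_le ht.1 h.ge)
  rintro _ ⟨s, ⟨hs, hsP⟩, rfl⟩ _ ⟨t, ⟨-, htP⟩, rfl⟩ hne hle
  have hst := le_of_mult_le hs hle
  exact hne (congrArg mult (le_antisymm hst (htP.2 hsP.1 hst)))

section Bricks

variable {N k : ℕ}

def brickSingle (i : Fin N) : (Fin k → ℤ) →ₗ[ℤ] (Fin N × Fin k → ℤ) :=
  (LinearEquiv.curry ℤ ℤ (Fin N) (Fin k)).symm.toLinearMap ∘ₗ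
    LinearMap.single ℤ (fun _ => Fin k → ℤ) i

theorem brickSingle_apply (i i' : Fin N) (x : Fin k → ℤ) (j : Fin k) :
    brickSingle i x (i', j) = if i' = i then x j else 0 := by
  by_cases h : i' = i
  · subst h; simp [brickSingle]
  · simp [brickSingle, h]

theorem brickSingle_injective (i : Fin N) : Function.Injective (brickSingle (k := k) i) :=
  fun x y h => funext fun j => by simpa [brickSingle_apply] using congrFun h (i, j)

theorem sum_brickSingle (z : Fin N × Fin k → ℤ) : ∑ i, brickSingle i (fun j => z (i, j)) = z :=
  funext fun ⟨i, j⟩ => by simp [Finset.sum_apply, brickSingle_apply]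

theorem brickSingle_conformalLE {i : Fin N} {x : Fin k → ℤ} {z : Fin N × Fin k → ℤ}
    (hx : x ⊑ fun j => z (i, j)) : brickSingle i x ⊑ z := fun ⟨i', j⟩ => by
  rw [brickSingle_apply]
  split_ifs with h
  exacts [h ▸ hx j, left_mem_uIcc]

def assembleBricks : Multiset (Fin N × (Fin k → ℤ)) →+ (Fin N × Fin k → ℤ) :=
  Multiset.sumAddMonoidHom.comp (Multiset.mapAddMonoidHom fun p => brickSingle p.1 p.2)

theorem assembleBricks_apply (T : Multiset (Fin N × (Fin k → ℤ))) :
    assembleBricks T = (T.map fun p => brickSingle p.1 p.2).sum := rfl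

theorem assembleBricks_ne_zero {T : Multiset (Fin N × (Fin k → ℤ))} {z : Fin N × Fin k → ℤ}
    (hT : ∀ p ∈ T, brickSingle p.1 p.2 ⊑ z) {p : Fin N × (Fin k → ℤ)} (hp : p ∈ T)
    (hp₀ : p.2 ≠ 0) : assembleBricks T ≠ 0 :=
  Multiset.sum_ne_zero_of_conformalLE (z := z) (Multiset.forall_mem_map_iff.2 hT)
    (Multiset.mem_map_of_mem _ hp)
    ((map_ne_zero_iff _ (brickSingle_injective p.1)).2 hp₀)

theorem assembleBricks_conformalLE_of_le {T R : Multiset (Fin N × (Fin k → ℤ))}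
    {z : Fin N × Fin k → ℤ} (hT : ∀ p ∈ T, brickSingle p.1 p.2 ⊑ z) (hRT : R ≤ T) :
    assembleBricks R ⊑ assembleBricks T :=
  Multiset.sum_conformalLE_sum_of_le (z := z) (Multiset.forall_mem_map_iff.2 hT)
    (Multiset.map_le_map hRT)

theorem ncard_nonzero_bricks_le_card (T : Multiset (Fin N × (Fin k → ℤ))) :
    {i | ∃ j, assembleBricks T (i, j) ≠ 0}.ncard ≤ Multiset.card T := by
  classical
  calc {i | ∃ j, assembleBricks T (i, j) ≠ 0}.ncard
      ≤ ((T.map Prod.fst).toFinset : Set (Fin N)).ncard := by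
        refine Set.ncard_le_ncard (fun i ⟨j, hj⟩ => ?_)
        contrapose! hj
        simp only [assembleBricks_apply, Pi.multiset_sum_apply, Multiset.map_map]
        refine Multiset.sum_eq_zero fun a ha => ?_
        obtain ⟨p, hp, rfl⟩ := Multiset.mem_map.1 ha
        have : i ≠ p.1 := fun h => hj (by simpa [h] using ⟨p.2, hp⟩)
        simp [brickSingle_apply, this]
    _ ≤ Multiset.card T := by
        rw [Set.ncard_coe_finset]
        exact (Multiset.toFinset_card_le _).trans (Multiset.card_map _ _).le

end Bricks

section Nfold

variable {d n m N : ℕ} (A : Matrix (Fin d) (Fin n) ℤ) (B : Matrix (Fin m) (Fin n) ℤ)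

theorem nfold_mulVec_brickSingle (i : Fin N) (x : Fin n → ℤ) :
    Nfold A B N *ᵥ brickSingle i x = Sum.elim (B *ᵥ x) (brickSingle i (A *ᵥ x)) := by
  funext r
  rcases r with r | ⟨i', r⟩ <;>
    simp [mulVec, dotProduct, Nfold, Fintype.sum_prod_type, brickSingle_apply, eq_comm]

theorem nfold_mulVec_assembleBricks {T : Multiset (Fin N × (Fin n → ℤ))}
    (hT : ∀ p ∈ T, A *ᵥ p.2 = 0) :
    Nfold A B N *ᵥ assembleBricks T = Sum.elim (T.map fun p => B *ᵥ p.2).sum 0 := by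
  induction T using Multiset.induction_on with
  | empty => simp
  | cons p T ih =>
    rw [Multiset.forall_mem_cons] at hT
    rw [assembleBricks_apply, Multiset.map_cons, Multiset.sum_cons, ← assembleBricks_apply,
      mulVec_add, ih hT.2, nfold_mulVec_brickSingle, hT.1, map_zero, Multiset.map_cons,
      Multiset.sum_cons, ← Sum.elim_add_add, add_zero]

theorem exists_assembleBricks_eq {z : Fin N × Fin n → ℤ} (hz : Nfold A B N *ᵥ z = 0) :
    ∃ T : Multiset (Fin N × (Fin n → ℤ)),
      (∀ p ∈ T, InGraver A p.2 ∧ brickSingle p.1 p.2 ⊑ z) ∧ assembleBricks T = z := by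
  have hA (i : Fin N) : A *ᵥ (fun j => z (i, j)) = 0 := funext fun r => by
    have := congrFun hz (Sum.inr (i, r))
    rw [← sum_brickSingle z, mulVec_sum, Finset.sum_apply] at this
    simpa [nfold_mulVec_brickSingle, brickSingle_apply] using this
  choose s hs hsum using fun i => exists_inGraver_decomposition A (hA i)
  refine ⟨∑ i, (s i).map (Prod.mk i), fun p hp => ?_, ?_⟩
  · obtain ⟨i, -, hp⟩ := Multiset.mem_sum.1 hp
    obtain ⟨g, hg, rfl⟩ := Multiset.mem_map.1 hp
    exact ⟨(hs i g hg).1, brickSingle_conformalLE (hs i g hg).2⟩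
  · conv_rhs => rw [← sum_brickSingle z]
    simp only [map_sum, assembleBricks_apply, Multiset.map_map, Function.comp_def,
      ← map_multiset_sum, hsum]

theorem InGraver.minimal_map_snd {z : Fin N × Fin n → ℤ} (hz : InGraver (Nfold A B N) z)
    {T : Multiset (Fin N × (Fin n → ℤ))}
    (hT : ∀ p ∈ T, InGraver A p.2 ∧ brickSingle p.1 p.2 ⊑ z) (hTz : assembleBricks T = z) :
    Minimal (fun t : Multiset (Fin n → ℤ) => t ≠ 0 ∧ (t.map (B *ᵥ ·)).sum = 0)
      (T.map Prod.snd) := by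
  have hker {R} (hR : R ≤ T) : Nfold A B N *ᵥ assembleBricks R = 0 ↔
      ((R.map Prod.snd).map (B *ᵥ ·)).sum = 0 := by
    rw [nfold_mulVec_assembleBricks A B fun p hp => (hT p (Multiset.mem_of_le hR hp)).1.2.1,
      Multiset.map_map]
    exact ⟨fun h => funext fun r => congrFun h (.inl r), fun h => by
      simp only [← Function.comp_def (B *ᵥ ·) Prod.snd, h, Sum.elim_zero_zero]⟩
  have hne {R} (hR : R ≤ T) (hR₀ : R ≠ 0) : assembleBricks R ≠ 0 := by
    obtain ⟨p, hp⟩ := Multiset.exists_mem_of_ne_zero hR₀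
    exact assembleBricks_ne_zero (fun q hq => (hT q (Multiset.mem_of_le hR hq)).2) hp
      (hT p (Multiset.mem_of_le hR hp)).1.1
  refine ⟨⟨?_, (hker le_rfl).1 (hTz ▸ hz.2.1)⟩, fun t ⟨ht₀, htB⟩ htT => ?_⟩
  · rw [Ne, Multiset.map_eq_zero]
    rintro rfl
    exact hz.1 (hTz.symm.trans (map_zero _))
  obtain ⟨R, hRT, rfl⟩ := Multiset.exists_le_map_eq htT
  by_contra hRT'
  have hsplit : assembleBricks R + assembleBricks (T - R) = z := by
    rw [← map_add, add_tsub_cancel_of_le hRT, hTz]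
  have hTR₀ : T - R ≠ 0 := fun h => hRT' (Multiset.map_le_map (tsub_eq_zero_iff_le.1 h))
  refine hz.2.2 ⟨assembleBricks R, assembleBricks (T - R), hne hRT (by rintro rfl; simp at ht₀),
    hne tsub_le_self hTR₀, (hker hRT).2 htB, ?_, ?_, hsplit.symm⟩
  · rw [eq_sub_of_add_eq' hsplit, mulVec_sub, hz.2.1, (hker hRT).2 htB, sub_zero]
  · exact (conformalLE_iff_mul_nonneg hsplit).1
      (hTz ▸ assembleBricks_conformalLE_of_le (fun p hp => (hT p hp).2) hRT)

end Nfold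

/-- Graver complexity: there is a constant `g(A,B)` such that every Graver basis
element of `[A,B]⁽ᴺ⁾` has at most `g(A,B)` nonzero bricks, independent of `N`. -/
theorem nfold_graver_complexity
    (d n m : ℕ) (A : Matrix (Fin d) (Fin n) ℤ) (B : Matrix (Fin m) (Fin n) ℤ) :
    ∃ g : ℕ, ∀ (N : ℕ) (z : (Fin N × Fin n) → ℤ), InGraver (Nfold A B N) z →
      {i : Fin N | ∃ j, z (i, j) ≠ 0}.ncard ≤ g := by
  obtain ⟨g, hg⟩ := ((Multiset.finite_setOf_minimal (finite_setOf_inGraver A)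
    fun t => t ≠ 0 ∧ (t.map (B *ᵥ ·)).sum = 0).image Multiset.card).bddAbove
  refine ⟨g, fun N z hz => ?_⟩
  obtain ⟨T, hT, rfl⟩ := exists_assembleBricks_eq A B hz.2.1
  calc _ ≤ Multiset.card T := ncard_nonzero_bricks_le_card T
    _ = Multiset.card (T.map Prod.snd) := (Multiset.card_map _ _).symm
    _ ≤ g := hg ⟨_, ⟨Multiset.forall_mem_map_iff.2 fun p hp => (hT p hp).1,
      hz.minimal_map_snd A B hT rfl⟩, rfl⟩
end
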